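/- Let A be a Banach algebra such that every cyclic bounded derivation D : A → A* satisfies D**(A**) ⊆ WAP(A) (viewing WAP(A) ⊆ A* ⊆ A***). If the bidual A** endowed with the first Arens product □ is approximately cyclic amenable, then A is approximately cyclic amenable. -/

import Mathlib

open Filter Topology

noncomputable section

universe u v

variable {A : Type u} [NonUnitalNormedRing A] [NormedSpace ℂ A]
  [IsScalarTower ℂ A A] [SMulCommClass ℂ A A]

/-- The left module action of `A` on its dual `A*`: `(a · f) b = f (b * a)`. -/
def lAct (a : A) (f : A →L[ℂ] ℂ) : A →L[ℂ] ℂ :=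
  f.comp ((ContinuousLinearMap.mul ℂ A).flip a)

/-- The right module action of `A` on its dual `A*`: `(f · a) b = f (a * b)`. -/
def rAct (f : A →L[ℂ] ℂ) (a : A) : A →L[ℂ] ℂ :=
  f.comp (ContinuousLinearMap.mul ℂ A a)

/-- A bounded linear `D : A → A*` is a derivation if `D (a * b) = D a · b + a · D b`. -/
def IsDerivation (D : A →L[ℂ] (A →L[ℂ] ℂ)) : Prop :=
  ∀ a b : A, D (a * b) = rAct (D a) b + lAct a (D b)

/-- A derivation `D : A → A*` is cyclic if `⟨D a, b⟩ + ⟨D b, a⟩ = 0` for all `a, b`. -/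
def IsCyclicDeriv (D : A →L[ℂ] (A →L[ℂ] ℂ)) : Prop :=
  ∀ a b : A, D a b + D b a = 0

/-- `D : A → A*` is approximately inner if there is a net `(f i)` in `A*` with
`D a = lim_i (a · f i - f i · a)` in norm, for every `a ∈ A`. -/
def IsApproxInner {A : Type u} [NonUnitalNormedRing A] [NormedSpace ℂ A]
    [IsScalarTower ℂ A A] [SMulCommClass ℂ A A] (D : A →L[ℂ] (A →L[ℂ] ℂ)) : Prop :=
  ∃ (ι : Type u) (l : Filter ι) (f : ι → (A →L[ℂ] ℂ)), l.NeBot ∧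
    ∀ a : A, Tendsto (fun i => lAct a (f i) - rAct (f i) a) l (𝓝 (D a))

/-- `D : A → A*` is inner if `D a = a · f - f · a` for some fixed `f ∈ A*`. -/
def IsInner (D : A →L[ℂ] (A →L[ℂ] ℂ)) : Prop :=
  ∃ f : A →L[ℂ] ℂ, ∀ a : A, D a = lAct a f - rAct f a

/-- A Banach algebra is approximately cyclic amenable if every cyclic bounded
derivation `D : A → A*` is approximately inner. -/
def ApproxCyclicAmenable (A : Type u) [NonUnitalNormedRing A] [NormedSpace ℂ A]
    [IsScalarTower ℂ A A] [SMulCommClass ℂ A A] : Prop :=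
  ∀ D : A →L[ℂ] (A →L[ℂ] ℂ), IsDerivation D → IsCyclicDeriv D → IsApproxInner D

/-- A Banach algebra is cyclic amenable if every cyclic bounded derivation
`D : A → A*` is inner. -/
def CyclicAmenable (A : Type u) [NonUnitalNormedRing A] [NormedSpace ℂ A]
    [IsScalarTower ℂ A A] [SMulCommClass ℂ A A] : Prop :=
  ∀ D : A →L[ℂ] (A →L[ℂ] ℂ), IsDerivation D → IsCyclicDeriv D → IsInner D

/-- The bidual of `A`; below we install the first Arens product on it. -/
abbrev Bidual (A : Type u) [NormedAddCommGroup A] [NormedSpace ℂ A] : Type u :=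
  (A →L[ℂ] ℂ) →L[ℂ] ℂ

namespace Bidual

variable (A)

/-- `f ↦ (a ↦ f · a)` where `(f · a) b = f (a * b)`, as a continuous bilinear map. -/
def rActL : (A →L[ℂ] ℂ) →L[ℂ] A →L[ℂ] (A →L[ℂ] ℂ) :=
  (((ContinuousLinearMap.compL ℂ A (A →L[ℂ] A) (A →L[ℂ] ℂ)).flip
      (ContinuousLinearMap.mul ℂ A)).comp
    (ContinuousLinearMap.compL ℂ A A ℂ))

@[simp] lemma rActL_apply (f : A →L[ℂ] ℂ) (a b : A) : rActL A f a b = f (a * b) := rfl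

/-- The action `G · f` of the bidual on the dual: `(G · f) a = G (f · a)`. -/
def dotAct (G : Bidual A) : (A →L[ℂ] ℂ) →L[ℂ] (A →L[ℂ] ℂ) :=
  (ContinuousLinearMap.compL ℂ A (A →L[ℂ] ℂ) ℂ G).comp (rActL A)

@[simp] lemma dotAct_apply (G : Bidual A) (f : A →L[ℂ] ℂ) (a : A) :
    dotAct A G f a = G (rActL A f a) := rfl

variable {A}

/-- The first Arens product on the bidual: `⟨F □ G, f⟩ = ⟨F, G · f⟩`. -/
instance : Mul (Bidual A) := ⟨fun F G => F.comp (dotAct A G)⟩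

@[simp] lemma mul_apply (F G : Bidual A) (f : A →L[ℂ] ℂ) :
    (F * G) f = F (dotAct A G f) := rfl

lemma dotAct_add (G H : Bidual A) : dotAct A (G + H) = dotAct A G + dotAct A H := by
  refine ContinuousLinearMap.ext fun g => ContinuousLinearMap.ext fun a => ?_
  simp

lemma dotAct_zero : dotAct A (0 : Bidual A) = 0 := by
  refine ContinuousLinearMap.ext fun g => ContinuousLinearMap.ext fun a => ?_
  simp

lemma dotAct_smul (c : ℂ) (G : Bidual A) : dotAct A (c • G) = c • dotAct A G := by
  refine ContinuousLinearMap.ext fun g => ContinuousLinearMap.ext fun a => ?_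
  simp

instance instNonUnitalRing : NonUnitalRing (Bidual A) where
  __ := (inferInstance : AddCommGroup ((A →L[ℂ] ℂ) →L[ℂ] ℂ))
  mul := (· * ·)
  left_distrib F G H := by
    refine ContinuousLinearMap.ext fun f => ?_
    simp [dotAct_add]
  right_distrib F G H := by
    refine ContinuousLinearMap.ext fun f => ?_
    rfl
  zero_mul F := by refine ContinuousLinearMap.ext fun f => ?_; rfl
  mul_zero F := by
    refine ContinuousLinearMap.ext fun f => ?_
    simp [dotAct_zero]
  mul_assoc F G H := by
    refine ContinuousLinearMap.ext fun f => ?_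
    show F _ = F _
    congr 1
    refine ContinuousLinearMap.ext fun a => ?_
    show G _ = G _
    congr 1
    refine ContinuousLinearMap.ext fun b => ?_
    show H _ = H _
    congr 1
    refine ContinuousLinearMap.ext fun c => ?_
    exact congrArg f (mul_assoc a b c)

lemma norm_dotAct_apply_le (G : Bidual A) (f : A →L[ℂ] ℂ) :
    ‖dotAct A G f‖ ≤ ‖G‖ * ‖f‖ := by
  refine ContinuousLinearMap.opNorm_le_bound _ (by positivity) fun a => ?_
  calc ‖G (rActL A f a)‖ ≤ ‖G‖ * ‖rActL A f a‖ := G.le_opNorm _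
    _ ≤ ‖G‖ * (‖f‖ * ‖a‖) := by
        refine mul_le_mul_of_nonneg_left ?_ (norm_nonneg G)
        refine ContinuousLinearMap.opNorm_le_bound _ (by positivity) fun b => ?_
        calc ‖f (a * b)‖ ≤ ‖f‖ * ‖a * b‖ := f.le_opNorm _
          _ ≤ ‖f‖ * (‖a‖ * ‖b‖) :=
              mul_le_mul_of_nonneg_left (norm_mul_le a b) (norm_nonneg f)
          _ = ‖f‖ * ‖a‖ * ‖b‖ := by ring
    _ = ‖G‖ * ‖f‖ * ‖a‖ := by ring

instance instNonUnitalNormedRing : NonUnitalNormedRing (Bidual A) where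
  __ := instNonUnitalRing
  __ := (inferInstance : NormedAddCommGroup ((A →L[ℂ] ℂ) →L[ℂ] ℂ))
  norm_mul_le F G := by
    refine ContinuousLinearMap.opNorm_le_bound _ (by positivity) fun f => ?_
    calc ‖F (dotAct A G f)‖ ≤ ‖F‖ * ‖dotAct A G f‖ := F.le_opNorm _
      _ ≤ ‖F‖ * (‖G‖ * ‖f‖) :=
          mul_le_mul_of_nonneg_left (norm_dotAct_apply_le G f) (norm_nonneg F)
      _ = ‖F‖ * ‖G‖ * ‖f‖ := by ring

instance : IsScalarTower ℂ (Bidual A) (Bidual A) where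
  smul_assoc c F G := by
    refine ContinuousLinearMap.ext fun f => ?_
    rfl

instance : SMulCommClass ℂ (Bidual A) (Bidual A) where
  smul_comm c F G := by
    refine ContinuousLinearMap.ext fun f => ?_
    show c • (F (dotAct A G f)) = F (dotAct A (c • G) f)
    rw [dotAct_smul]
    simp

end Bidual

/-- `f ↦ (a ↦ a · f)` where `(a · f) b = f (b * a)`, as a continuous bilinear map. -/
def lActL (A : Type u) [NonUnitalNormedRing A] [NormedSpace ℂ A]
    [IsScalarTower ℂ A A] [SMulCommClass ℂ A A] :
    (A →L[ℂ] ℂ) →L[ℂ] A →L[ℂ] (A →L[ℂ] ℂ) :=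
  (((ContinuousLinearMap.compL ℂ A (A →L[ℂ] A) (A →L[ℂ] ℂ)).flip
      ((ContinuousLinearMap.mul ℂ A).flip)).comp
    (ContinuousLinearMap.compL ℂ A A ℂ))

@[simp] lemma lActL_apply (f : A →L[ℂ] ℂ) (a b : A) : lActL A f a b = f (b * a) := rfl

/-- The Banach-space adjoint (transpose) of a bounded linear map: `adjointMap T g = g ∘ T`. -/
def adjointMap {E : Type u} {F : Type v} [NormedAddCommGroup E] [NormedSpace ℂ E]
    [NormedAddCommGroup F] [NormedSpace ℂ F] (T : E →L[ℂ] F) :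
    (F →L[ℂ] ℂ) →L[ℂ] (E →L[ℂ] ℂ) :=
  (ContinuousLinearMap.compL ℂ E F ℂ).flip T

@[simp] lemma adjointMap_apply {E : Type u} {F : Type v} [NormedAddCommGroup E]
    [NormedSpace ℂ E] [NormedAddCommGroup F] [NormedSpace ℂ F] (T : E →L[ℂ] F)
    (g : F →L[ℂ] ℂ) : adjointMap T g = g.comp T := rfl

/-- A bounded linear operator between normed spaces is weakly compact if the image of the
closed unit ball is relatively compact in the weak topology of the codomain. -/
def IsWeaklyCompactOp {E : Type u} {F : Type v} [NormedAddCommGroup E] [NormedSpace ℂ E]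
    [NormedAddCommGroup F] [NormedSpace ℂ F] (T : E →L[ℂ] F) : Prop :=
  IsCompact (closure ((toWeakSpace ℂ F) '' (T '' Metric.closedBall 0 1)))

/-! For a cyclic derivation `D : A → A*` one has `⟨D**(F), b⟩ = -F(D b)` for `b ∈ A ⊆ A**`, so
whenever `D**(F)` lies in `A*` it equals `-(F ∘ D)`; hence `F(G ∘ D) = -G(F ∘ D)`, i.e. `D**` is
cyclic on `A**`. If moreover `a ↦ a · (F ∘ D)` is weakly compact, its second adjoint takes
values in `A*` (by Goldstine's theorem, `A**` is the weak* closure of bounded sets of `A`), which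
gives `⟨G, H · (F ∘ D)⟩ = ⟨H, G ∘ (a ↦ a · (F ∘ D))⟩`; this interchange of the two Arens-type
pairings is exactly what makes `D**` a derivation for `□`.
So `D**` is approximately inner, and restricting the implementing net in `A***` to `A` shows
that `D` is approximately inner. -/

section Goldstine

variable {𝕜 E : Type*} [RCLike 𝕜] [NormedAddCommGroup E] [NormedSpace 𝕜 E]

open RCLike Metric

theorem ContinuousLinearMap.mul_norm_le_of_forall_re_le {ψ : E →L[𝕜] 𝕜} {r u : ℝ}
    (hr : 0 ≤ r) (h : ∀ a ∈ closedBall (0 : E) r, re (ψ a) ≤ u) : r * ‖ψ‖ ≤ u := by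
  have hnorm : ∀ a ∈ closedBall (0 : E) r, ‖ψ a‖ ≤ u := by
    intro a ha
    obtain ⟨c, hc, hca⟩ := exists_norm_eq_mul_self (ψ a)
    have hmem : c • a ∈ closedBall (0 : E) r := by simpa [norm_smul, hc] using ha
    simpa [← hca] using h _ hmem
  rcases hr.eq_or_lt with rfl | hr
  · simpa using hnorm 0 (by simp)
  have hu : 0 ≤ u := (norm_nonneg _).trans (hnorm 0 (mem_closedBall_self hr.le))
  rw [← le_div_iff₀' hr]
  refine ψ.opNorm_le_of_unit_norm (div_nonneg hu hr.le) fun x hx => ?_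
  have := hnorm ((r : 𝕜) • x) (by simp [norm_smul, hx, abs_of_pos hr])
  rw [map_smul, norm_smul, norm_ofReal, abs_of_pos hr] at this
  rwa [le_div_iff₀' hr]

theorem goldstine_fintype {ι : Type*} [Fintype ι] (g : ι → E →L[𝕜] 𝕜)
    (H : (E →L[𝕜] 𝕜) →L[𝕜] 𝕜) :
    (fun i => H (g i)) ∈ closure ((fun a i => g i a) '' closedBall (0 : E) ‖H‖) := by
  classical
  let := NormedSpace.restrictScalars ℝ 𝕜 E
  set S : E →L[𝕜] (ι → 𝕜) := ContinuousLinearMap.pi g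
  by_contra hz
  have hconv : Convex ℝ (closure (S '' closedBall (0 : E) ‖H‖)) :=
    ((convex_closedBall (0 : E) _).linear_image (S.restrictScalars ℝ).toLinearMap).closure
  obtain ⟨φ, u, hφu, huz⟩ :=
    geometric_hahn_banach_closed_point (𝕜 := 𝕜) hconv isClosed_closure hz
  have hφ (w : ι → 𝕜) : φ w = ∑ i, w i * φ (Pi.single i 1) := by
    conv_lhs => rw [← Finset.univ_sum_single w]
    rw [map_sum]
    refine Finset.sum_congr rfl fun i _ => ?_
    rw [← smul_eq_mul, ← map_smul, ← Pi.single_smul, smul_eq_mul, mul_one]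
  set ψ : E →L[𝕜] 𝕜 := φ.comp S
  have hψ : ψ = ∑ i, φ (Pi.single i 1) • g i := by
    ext a
    rw [ContinuousLinearMap.comp_apply, hφ]
    simp [S, mul_comm]
  have hφz : φ (fun i => H (g i)) = H ψ := by
    rw [hφ, hψ]
    simp [mul_comm]
  rw [hφz] at huz
  have hub : ‖H‖ * ‖ψ‖ ≤ u :=
    ψ.mul_norm_le_of_forall_re_le (norm_nonneg H) fun a ha =>
      (hφu _ (subset_closure (Set.mem_image_of_mem S ha))).le
  have := (re_le_norm (H ψ)).trans (H.le_opNorm ψ)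
  linarith

/-- Goldstine's theorem, with the weak* topology of the bidual encoded as the product topology
on `(E →L[𝕜] 𝕜) → 𝕜`. -/
theorem goldstine (H : (E →L[𝕜] 𝕜) →L[𝕜] 𝕜) :
    (⇑H : (E →L[𝕜] 𝕜) → 𝕜) ∈
      closure ((fun a (g : E →L[𝕜] 𝕜) => g a) '' closedBall (0 : E) ‖H‖) := by
  rw [mem_closure_iff_nhds]
  intro U hU
  rw [nhds_pi, Filter.mem_pi] at hU
  obtain ⟨I, hI, t, ht, hIt⟩ := hU
  have := hI.fintype
  obtain ⟨_, hy, a, ha, rfl⟩ := mem_closure_iff_nhds.mp (goldstine_fintype (fun g : I => g.1) H)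
    (Set.univ.pi fun g => t g) (set_pi_mem_nhds Set.finite_univ fun g _ => ht g)
  exact ⟨_, hIt fun g hg => hy ⟨g, hg⟩ trivial, a, ha, rfl⟩

end Goldstine

section WeaklyCompact

variable {E F : Type*} [NormedAddCommGroup E] [NormedSpace ℂ E] [NormedAddCommGroup F]
  [NormedSpace ℂ F] {T : E →L[ℂ] F}

open Metric Pointwise

theorem IsWeaklyCompactOp.exists_apply_comp_eq (hT : IsWeaklyCompactOp T)
    (H : (E →L[ℂ] ℂ) →L[ℂ] ℂ) : ∃ y : F, ∀ G : F →L[ℂ] ℂ, H (G.comp T) = G y := by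
  set c : ℂ := (‖H‖ : ℂ)
  set K := closure (toWeakSpace ℂ F '' (T '' closedBall 0 1))
  let ρ : ((E →L[ℂ] ℂ) → ℂ) → (F →L[ℂ] ℂ) → ℂ := fun Λ G => Λ (G.comp T)
  let θ : WeakSpace ℂ F → (F →L[ℂ] ℂ) → ℂ := fun y G => G ((toWeakSpace ℂ F).symm y)
  have hρ : Continuous ρ := continuous_pi fun G => continuous_apply _
  have hθ : Continuous θ :=
    continuous_pi fun G => WeakBilin.eval_continuous (topDualPairing ℂ F).flip G
  -- `ρ` maps the ball of radius `‖H‖` of `E ⊆ E**` into the compact set `θ (‖H‖ • K)`,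
  -- hence by Goldstine it maps `H` there too.
  have hball :
      (fun a (g : E →L[ℂ] ℂ) => g a) '' closedBall 0 ‖H‖ ⊆ ρ ⁻¹' (θ '' (c • K)) := by
    rintro _ ⟨a, ha, rfl⟩
    obtain ⟨b, hb, rfl⟩ : a ∈ c • closedBall (0 : E) 1 := by
      simpa [_root_.smul_closedBall, c, abs_of_nonneg (norm_nonneg H)] using ha
    refine ⟨c • toWeakSpace ℂ F (T b), Set.smul_mem_smul_set ?_, ?_⟩
    · exact subset_closure (Set.mem_image_of_mem _ (Set.mem_image_of_mem _ hb))
    · ext G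
      simp [θ, ρ]
  obtain ⟨y, -, hy⟩ : ρ H ∈ θ '' (c • K) :=
    closure_minimal hball
      (((hT.image (continuous_const_smul c)).image hθ).isClosed.preimage hρ) (goldstine H)
  exact ⟨(toWeakSpace ℂ F).symm y, fun G => (congrFun hy G).symm⟩

theorem IsWeaklyCompactOp.neg (hT : IsWeaklyCompactOp T) : IsWeaklyCompactOp (-T) := by
  have : (-T) '' closedBall 0 1 = T '' closedBall 0 1 := by
    rw [show ⇑(-T) = T ∘ Neg.neg from funext fun a => (map_neg T a).symm, Set.image_comp,
      Set.image_neg_eq_neg, neg_closedBall, neg_zero]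
  rwa [IsWeaklyCompactOp, this]

end WeaklyCompact

open NormedSpace Bidual

lemma Bidual.apply_dotAct_of_isWeaklyCompactOp {f : A →L[ℂ] ℂ}
    (hf : IsWeaklyCompactOp (lActL A f)) (G H : Bidual A) :
    G (dotAct A H f) = H (G.comp (lActL A f)) := by
  obtain ⟨h, hh⟩ := hf.exists_apply_comp_eq H
  have : h = dotAct A H f :=
    ContinuousLinearMap.ext fun b => (hh (inclusionInDoubleDual ℂ A b)).symm
  rw [hh G, this]

lemma IsCyclicDeriv.adjointMap_inclusionInDoubleDual {A : Type*} [NonUnitalNormedRing A]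
    [NormedSpace ℂ A] {D : A →L[ℂ] (A →L[ℂ] ℂ)} (hD : IsCyclicDeriv D) (b : A) :
    adjointMap D (inclusionInDoubleDual ℂ A b) = -D b :=
  ContinuousLinearMap.ext fun a => eq_neg_of_add_eq_zero_left (hD a b)

lemma IsCyclicDeriv.adjointMap_eq_neg {A : Type*} [NonUnitalNormedRing A] [NormedSpace ℂ A]
    {D : A →L[ℂ] (A →L[ℂ] ℂ)} (hD : IsCyclicDeriv D) {F : (A →L[ℂ] ℂ) →L[ℂ] ℂ}
    {f : A →L[ℂ] ℂ}
    (hF : adjointMap (adjointMap D) F = inclusionInDoubleDual ℂ (A →L[ℂ] ℂ) f) :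
    adjointMap D F = -f := by
  ext b
  have := congr($hF (inclusionInDoubleDual ℂ A b))
  simp only [adjointMap_apply, ContinuousLinearMap.comp_apply,
    hD.adjointMap_inclusionInDoubleDual, map_neg, dual_def] at this
  simp [← this]

section Derivation

variable {D : A →L[ℂ] (A →L[ℂ] ℂ)}

lemma IsCyclicDeriv.apply_adjointMap (hD : IsCyclicDeriv (adjointMap (adjointMap D)))
    (F G : Bidual A) : F (adjointMap D G) = -G (adjointMap D F) :=
  eq_neg_of_add_eq_zero_left (hD F G)

lemma IsCyclicDeriv.adjointMap_adjointMap (hD : IsCyclicDeriv D)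
    (h : ∀ F : Bidual A, ∃ f,
      adjointMap (adjointMap D) F = inclusionInDoubleDual ℂ (A →L[ℂ] ℂ) f) :
    IsCyclicDeriv (adjointMap (adjointMap D)) := by
  intro F G
  obtain ⟨f, hf⟩ := h F
  have hFG : F (adjointMap D G) = G f := congr($hf G)
  show F (adjointMap D G) + G (adjointMap D F) = 0
  rw [hFG, hD.adjointMap_eq_neg hf, map_neg, add_neg_cancel]

lemma IsDerivation.rActL_adjointMap (hD : IsDerivation D) (G : Bidual A) (c : A) :
    rActL A (adjointMap D G) c
      = dotAct A G (D c) + adjointMap D (G * inclusionInDoubleDual ℂ A c) := by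
  ext a
  show G (D (c * a)) = G (rAct (D c) a) + G (lAct c (D a))
  rw [hD, map_add]

lemma IsDerivation.dotAct_adjointMap (hD : IsDerivation D)
    (hcyc : IsCyclicDeriv (adjointMap (adjointMap D))) (F G : Bidual A) :
    dotAct A F (adjointMap D G)
      = adjointMap D (F * G) - G.comp (lActL A (adjointMap D F)) := by
  ext c
  rw [dotAct_apply, hD.rActL_adjointMap, map_add, hcyc.apply_adjointMap F, sub_apply,
    sub_eq_add_neg]
  rfl

lemma IsDerivation.adjointMap_adjointMap (hD : IsDerivation D)
    (hcyc : IsCyclicDeriv (adjointMap (adjointMap D)))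
    (hwc : ∀ F : Bidual A, IsWeaklyCompactOp (lActL A (adjointMap D F))) :
    IsDerivation (adjointMap (adjointMap D)) := by
  intro F G
  ext H
  show (F * G) (adjointMap D H) = F (adjointMap D (G * H)) + G (adjointMap D (H * F))
  have key := congr(H $(hD.dotAct_adjointMap hcyc F G))
  rw [map_sub, ← apply_dotAct_of_isWeaklyCompactOp (hwc F), ← mul_apply, ← mul_apply] at key
  rw [hcyc.apply_adjointMap (F * G), hcyc.apply_adjointMap F, hcyc.apply_adjointMap G]
  linear_combination key

end Derivation

lemma IsApproxInner.of_adjointMap_adjointMap {D : A →L[ℂ] (A →L[ℂ] ℂ)}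
    (h : IsApproxInner (adjointMap (adjointMap D))) : IsApproxInner D := by
  obtain ⟨ι, l, Λ, hl, hΛ⟩ := h
  set R := adjointMap (F := (A →L[ℂ] ℂ) →L[ℂ] ℂ) (inclusionInDoubleDual ℂ A)
  refine ⟨ι, l, fun i => R (Λ i), hl, fun a => ?_⟩
  have hR (Φ : Bidual A →L[ℂ] ℂ) : R (lAct (inclusionInDoubleDual ℂ A a) Φ
      - rAct Φ (inclusionInDoubleDual ℂ A a)) = lAct a (R Φ) - rAct (R Φ) a := by
    rw [map_sub]
    rfl
  have hRD : R (adjointMap (adjointMap D) (inclusionInDoubleDual ℂ A a)) = D a := rfl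
  simpa only [Function.comp_def, hR, hRD] using
    (R.continuous.tendsto _).comp (hΛ (inclusionInDoubleDual ℂ A a))

theorem approxCyclicAmenable_of_bidual_wap_general
    {A : Type u} [NonUnitalNormedRing A] [NormedSpace ℂ A]
    [IsScalarTower ℂ A A] [SMulCommClass ℂ A A]
    (hwap : ∀ D : A →L[ℂ] (A →L[ℂ] ℂ), IsDerivation D → IsCyclicDeriv D →
      ∀ F : Bidual A, ∃ f : A →L[ℂ] ℂ, IsWeaklyCompactOp (lActL A f) ∧
        adjointMap (adjointMap D) F = NormedSpace.inclusionInDoubleDual ℂ (A →L[ℂ] ℂ) f)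
    (hACA : ApproxCyclicAmenable (Bidual A)) :
    ApproxCyclicAmenable A := by
  intro D hD hcyc
  choose f hf hDf using hwap D hD hcyc
  have hcyc₂ := hcyc.adjointMap_adjointMap fun F => ⟨f F, hDf F⟩
  refine IsApproxInner.of_adjointMap_adjointMap (hACA _ ?_ hcyc₂)
  refine hD.adjointMap_adjointMap hcyc₂ fun F => ?_
  rw [hcyc.adjointMap_eq_neg (hDf F), map_neg]
  exact (hf F).neg

/-- Suppose every cyclic bounded derivation `D : A → A*` satisfies
`D**(A**) ⊆ WAP(A)` (viewing `WAP(A) ⊆ A* ⊆ A***`), where `WAP(A)` is the set of `f ∈ A*`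
such that `a ↦ a · f` is weakly compact.  If `(A**, □)` is approximately cyclic amenable,
then `A` is approximately cyclic amenable. -/
theorem approxCyclicAmenable_of_bidual_wap
    {A : Type u} [NonUnitalNormedRing A] [NormedSpace ℂ A]
    [IsScalarTower ℂ A A] [SMulCommClass ℂ A A] [CompleteSpace A]
    (hwap : ∀ D : A →L[ℂ] (A →L[ℂ] ℂ), IsDerivation D → IsCyclicDeriv D →
      ∀ F : Bidual A, ∃ f : A →L[ℂ] ℂ, IsWeaklyCompactOp (lActL A f) ∧
        adjointMap (adjointMap D) F = NormedSpace.inclusionInDoubleDual ℂ (A →L[ℂ] ℂ) f)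
    (hACA : ApproxCyclicAmenable (Bidual A)) :
    ApproxCyclicAmenable A :=
  approxCyclicAmenable_of_bidual_wap_general hwap hACA
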